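/- arXiv:2102.09800 — 5 statements merged into one kernel-verified Lean document; each statement's English description precedes it below -/
import Mathlib

section
/- In an alternative ring R, for all x, y, r in R one has the identity (x*y)*r - r*(x*y) - x*(y*r - r*y) - (x*r - r*x)*y = 3*((x*y)*r - x*(y*r)), i.e. [x*y, r] - x*[y, r] - [x, r]*y = 3*(x,y,r), where [a,b] = a*b - b*a denotes the commutator and (x,y,z) the associator. -/
/-!
Expanding the products, `[x*y, r] - x*[y, r] - [x, r]*y` equals `(x,y,r) + (r,x,y) - (x,r,y)` in
any ring, associative or not. Linearizing the alternative laws shows that the associator changes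
sign under a swap of its first two or of its last two arguments, so `(r,x,y) = -(x,r,y) = (x,y,r)`
and all three terms equal `(x,y,r)`.
-/

section NonUnitalNonAssocRing

variable {R : Type*} [NonUnitalNonAssocRing R]

theorem commutator_mul_sub_eq_associator (x y r : R) :
    (x*y)*r - r*(x*y) - x*(y*r - r*y) - (x*r - r*x)*y
      = associator x y r + associator r x y - associator x r y := by
  simp only [associator_apply, mul_sub, sub_mul]
  abel

theorem associator_swap_left (hl : ∀ x y : R, (x*x)*y = x*(x*y)) (x y z : R) :
    associator y x z = -associator x y z := by
  have h := hl (x + y) z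
  simp only [add_mul, mul_add, hl x z, hl y z] at h
  simp only [associator_apply]
  linear_combination (norm := abel) h

theorem associator_swap_right (hr : ∀ x y : R, (y*x)*x = y*(x*x)) (x y z : R) :
    associator x z y = -associator x y z := by
  have h := hr (y + z) x
  simp only [add_mul, mul_add, hr y x, hr z x] at h
  simp only [associator_apply]
  linear_combination (norm := abel) h

end NonUnitalNonAssocRing

theorem stmt_1 {R : Type*} [NonUnitalNonAssocRing R]
    (hl : ∀ x y : R, (x*x)*y = x*(x*y))
    (hr : ∀ x y : R, (y*x)*x = y*(x*x)) :
    ∀ x y r : R,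
      (x*y)*r - r*(x*y) - x*(y*r - r*y) - (x*r - r*x)*y
        = (3 : ℕ) • ((x*y)*r - x*(y*r)) := by
  intro x y r
  rw [commutator_mul_sub_eq_associator, associator_swap_left hl x r y,
    associator_swap_right hr x y r, ← associator_apply]
  abel
end

section
/- Let R be an alternative ring, n an element of the nucleus, and w, x, y, z in R. Then [w,n]*(x,y,z) = -[x,n]*(w,y,z), where [a,b] = a*b - b*a. In particular, if n' is also in the nucleus, then [n',n]*(x,y,z) = 0 for all x, y, z in R. -/
/-!
In an alternative ring the associator is alternating, and combining the Teichmüller identity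
`associator_cocycle` at `(a,a,b,c)`, `(a,a,c,b)` and `(a,b,a,c)` gives `a * (a,b,c) = (a,b*a,c)`.
A nuclear `n` passes into the middle slot: `n * (x,y,z) = (x,n*y,z)`. Hence
`(w*n) * (w,y,z) = w * (w,n*y,z) = (w,n*y*w,z)` and
`(n*w) * (w,y,z) = n * (w,y*w,z) = (w,n*(y*w),z)` coincide, so `[w,n] * (w,y,z) = 0`;
polarizing in `w` gives the identity, and for a nuclear `n'` its right-hand side contains
`(n',y,z) = 0`.
-/

section NonUnitalNonAssocRing

variable {R : Type*} [NonUnitalNonAssocRing R]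

theorem associator_add_left (x y z w : R) :
    associator (x + y) z w = associator x z w + associator y z w := by
  simp only [associator, add_mul]; abel

theorem associator_add_mid (x y z w : R) :
    associator x (y + z) w = associator x y w + associator x z w := by
  simp only [associator, add_mul, mul_add]; abel

theorem associator_add_right (x y z w : R) :
    associator x y (z + w) = associator x y z + associator x y w := by
  simp only [associator, mul_add]; abel

end NonUnitalNonAssocRing

class IsAlternative (R : Type*) [NonUnitalNonAssocRing R] : Prop where
  associator_self_left (x y : R) : associator x x y = 0
  associator_self_right (x y : R) : associator x y y = 0

namespace IsAlternative

variable {R : Type*} [NonUnitalNonAssocRing R] [IsAlternative R]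

theorem associator_swap_left (x y z : R) : associator y x z = -associator x y z := by
  have h := associator_self_left (x + y) z
  rw [associator_add_left, associator_add_mid, associator_add_mid] at h
  simp only [associator_self_left, zero_add, add_zero] at h
  linear_combination (norm := abel) h

theorem associator_swap_right (x y z : R) : associator x z y = -associator x y z := by
  have h := associator_self_right x (y + z)
  rw [associator_add_mid, associator_add_right, associator_add_right] at h
  simp only [associator_self_right, zero_add, add_zero] at h
  linear_combination (norm := abel) h

theorem associator_self_mid (x y : R) : associator x y x = 0 := by
  rw [associator_swap_left, associator_self_right, neg_zero]

theorem associator_cycle (x y z : R) : associator y z x = associator x y z := by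
  rw [associator_swap_right, associator_swap_left, neg_neg]

theorem associator_mul_self_mid (a b c : R) :
    associator a (b * a) c = a * associator a b c := by
  have h₁ := associator_cocycle a a b c
  have h₂ := associator_cocycle a a c b
  have h₃ := associator_cocycle a b a c
  simp only [associator_self_left, associator_self_mid, zero_mul, sub_zero, add_zero]
    at h₁ h₂ h₃
  rw [associator_swap_right a b c, mul_neg, associator_swap_right (a * a) b c] at h₂
  rw [associator_swap_left a b c, mul_neg, associator_swap_left a (a * b) c,
    associator_swap_right a (a * c) b] at h₃
  linear_combination (norm := abel) h₃ - h₁ - h₂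

section Nuclear

variable {n : R}

theorem mul_assoc_of_nuclear (hn : ∀ x y : R, associator n x y = 0) (x y : R) :
    x * n * y = x * (n * y) := by
  rw [← sub_eq_zero, ← associator, associator_swap_left, hn, neg_zero]

theorem mul_associator_of_nuclear (hn : ∀ x y : R, associator n x y = 0) (x y z : R) :
    n * associator x y z = associator x (n * y) z := by
  have h := associator_cocycle n y z x
  rw [hn, hn, hn, zero_mul, sub_zero, add_zero, add_zero, sub_eq_zero] at h
  rw [← associator_cycle x y z, h, associator_cycle]

theorem commutator_mul_associator_self_of_nuclear (hn : ∀ x y : R, associator n x y = 0)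
    (w y z : R) : (w * n - n * w) * associator w y z = 0 := by
  calc (w * n - n * w) * associator w y z
      = w * (n * associator w y z) - n * (w * associator w y z) := by
        rw [sub_mul, mul_assoc_of_nuclear hn, ← sub_eq_zero.mp (hn w _)]
    _ = w * associator w (n * y) z - n * associator w (y * w) z := by
        rw [mul_associator_of_nuclear hn, associator_mul_self_mid]
    _ = associator w (n * y * w) z - associator w (n * (y * w)) z := by
        rw [associator_mul_self_mid w (n * y), mul_associator_of_nuclear hn w (y * w)]
    _ = 0 := by rw [sub_eq_zero.mp (hn y w), sub_self]

theorem commutator_mul_associator_of_nuclear (hn : ∀ x y : R, associator n x y = 0)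
    (w x y z : R) :
    (w * n - n * w) * associator x y z = -((x * n - n * x) * associator w y z) := by
  have h := commutator_mul_associator_self_of_nuclear hn (w + x) y z
  have hw := commutator_mul_associator_self_of_nuclear hn w y z
  have hx := commutator_mul_associator_self_of_nuclear hn x y z
  simp only [associator_add_left, add_mul, mul_add, sub_mul] at h hw hx ⊢
  linear_combination (norm := abel) h - hw - hx

end Nuclear

end IsAlternative

theorem stmt_8 {R : Type*} [NonUnitalNonAssocRing R]
    (hl : ∀ x y : R, (x*x)*y = x*(x*y))
    (hr : ∀ x y : R, (y*x)*x = y*(x*x))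
    (n : R) (hn : ∀ x y : R, (n*x)*y = n*(x*y)) :
    (∀ w x y z : R,
      (w*n - n*w)*((x*y)*z - x*(y*z)) = -((x*n - n*x)*((w*y)*z - w*(y*z)))) ∧
    (∀ n' : R, (∀ x y : R, (n'*x)*y = n'*(x*y)) →
      ∀ x y z : R, (n'*n - n*n')*((x*y)*z - x*(y*z)) = 0) := by
  have : IsAlternative R :=
    ⟨fun x y => sub_eq_zero.mpr (hl x y), fun x y => sub_eq_zero.mpr (hr y x)⟩
  have hn : ∀ x y : R, associator n x y = 0 := fun x y => sub_eq_zero.mpr (hn x y)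
  refine ⟨IsAlternative.commutator_mul_associator_of_nuclear hn, fun n' hn' x y z => ?_⟩
  have h := IsAlternative.commutator_mul_associator_of_nuclear hn n' x y z
  rwa [show associator n' y z = 0 from sub_eq_zero.mpr (hn' y z), mul_zero, neg_zero] at h
end

section
/- In an alternative ring R, for all x, y, t in R: (x*y, x, t) = (y, x, x*t) and (y*x, x, t) = (y, x, t*x). Consequently ([x,y], x, t) = (y, x, [x,t]), where [a,b] = a*b - b*a and (a,b,c) is the associator. -/
private theorem Lhl' {R : Type*} [NonUnitalNonAssocRing R]
    (hl : ∀ x y : R, (x*x)*y = x*(x*y)) (a c b : R) :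
    (a*c)*b + (c*a)*b = a*(c*b) + c*(a*b) := by
  have h := hl (a+c) b
  simp only [add_mul, mul_add] at h
  linear_combination (norm := abel1) h - hl a b - hl c b

private theorem Lhr' {R : Type*} [NonUnitalNonAssocRing R]
    (hr : ∀ x y : R, (y*x)*x = y*(x*x)) (b a c : R) :
    (b*a)*c + (b*c)*a = b*(a*c) + b*(c*a) := by
  have h := hr (a+c) b
  simp only [add_mul, mul_add] at h
  linear_combination (norm := abel1) h - hr a b - hr c b

theorem stmt_12 {R : Type*} [NonUnitalNonAssocRing R]
    (hl : ∀ x y : R, (x*x)*y = x*(x*y))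
    (hr : ∀ x y : R, (y*x)*x = y*(x*x)) :
    ∀ x y t : R,
      ((x*y)*x)*t - (x*y)*(x*t) = (y*x)*(x*t) - y*(x*(x*t)) ∧
      ((y*x)*x)*t - (y*x)*(x*t) = (y*x)*(t*x) - y*(x*(t*x)) ∧
      ((x*y - y*x)*x)*t - (x*y - y*x)*(x*t)
        = (y*x)*(x*t - t*x) - y*(x*(x*t - t*x)) := by
  intro x y t
  have g1 : ((x*y)*x)*t - (x*y)*(x*t) = (y*x)*(x*t) - y*(x*(x*t)) := by
    linear_combination (norm := (simp only [mul_add, add_mul, mul_sub, sub_mul]; abel1))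
      (- (hr x y * t) - (hr x y * t)
      + Lhl' hl x (y*x) t
      + hl x (t*y)
      + x * Lhl' hl x y t
      - y * hl x t
      - hl x t * y
      + Lhl' hl x y x * t
      - x * Lhr' hr x y t
      + Lhr' hr (x*x) y t
      - Lhl' hl y (x*x) t
      - Lhr' hr x (x*t) y)
  have g2 : ((y*x)*x)*t - (y*x)*(x*t) = (y*x)*(t*x) - y*(x*(t*x)) := by
    linear_combination (norm := (simp only [mul_add, add_mul, mul_sub, sub_mul]; abel1))
      (- (t * hr x y)
      - Lhl' hl y t x * x
      - y * hr x t
      - Lhl' hl t (y*x) x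
      + Lhr' hr (y*x) x t
      + Lhl' hl y t (x*x)
      + hr x (t*y)
      - Lhr' hr y (t*x) x
      + hr x (y*t))
  refine ⟨g1, g2, ?_⟩
  linear_combination (norm := (simp only [mul_add, add_mul, mul_sub, sub_mul]; abel1)) g1 - g2
end

section
/- Let R be an alternative ring in which every non-zero commutator is not a left zero divisor. If x in R is not in the commutative center (there exists y with x*y ≠ y*x), then x is not a left zero divisor: x*t = 0 implies t = 0. -/
/-!
If `x * t = 0` but `t * x ≠ 0`, then `x * t - t * x = -(t * x)` is a nonzero commutator which,
by flexibility, kills `t`. Otherwise `x` and `t` annihilate each other, and the Moufang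
identities show that the commutator `x * (y * x) - (y * x) * x = (x * y - y * x) * x` kills `t`.
It is nonzero, since otherwise the nonzero commutator `x * y - y * x` would kill `x`.
-/

namespace Alternative

variable {R : Type*} [NonUnitalNonAssocRing R]

theorem associator_self_left (hl : ∀ x y : R, (x*x)*y = x*(x*y)) (x y : R) :
    associator x x y = 0 :=
  sub_eq_zero.mpr (hl x y)

theorem associator_self_right (hr : ∀ x y : R, (y*x)*x = y*(x*x)) (x y : R) :
    associator y x x = 0 :=
  sub_eq_zero.mpr (hr x y)

theorem associator_swap_left (hl : ∀ x y : R, (x*x)*y = x*(x*y)) (a b c : R) :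
    associator b a c = -associator a b c := by
  simp only [associator_apply]
  linear_combination (norm := (simp only [mul_add, add_mul]; abel)) hl (a+b) c - hl a c - hl b c

theorem associator_swap_right (hr : ∀ x y : R, (y*x)*x = y*(x*x)) (a b c : R) :
    associator a c b = -associator a b c := by
  simp only [associator_apply]
  linear_combination (norm := (simp only [mul_add, add_mul]; abel)) hr (b+c) a - hr b a - hr c a

theorem associator_rotate (hl : ∀ x y : R, (x*x)*y = x*(x*y))
    (hr : ∀ x y : R, (y*x)*x = y*(x*x)) (a b c : R) : associator b c a = associator a b c := by
  rw [associator_swap_right hr, associator_swap_left hl, neg_neg]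

theorem flexible (hl : ∀ x y : R, (x*x)*y = x*(x*y)) (hr : ∀ x y : R, (y*x)*x = y*(x*x))
    (x y : R) : (x*y)*x = x*(y*x) := by
  rw [← sub_eq_zero, ← associator_apply, associator_swap_right hr, associator_self_left hl,
    neg_zero]

theorem associator_mul_left_self (hl : ∀ x y : R, (x*x)*y = x*(x*y))
    (hr : ∀ x y : R, (y*x)*x = y*(x*x)) (x y : R) : associator (x*y) x y = 0 := by
  have h := associator_cocycle x x y y
  simp only [associator_self_left hl, associator_self_right hr, mul_zero, zero_mul, sub_zero,
    add_zero, zero_add] at h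
  rw [associator_swap_left hl, h, neg_zero]

theorem associator_mul_left_skew (hl : ∀ x y : R, (x*x)*y = x*(x*y))
    (hr : ∀ x y : R, (y*x)*x = y*(x*x)) (x y z : R) :
    associator (x*z) x y = -associator (x*y) x z := by
  have hyz := associator_mul_left_self hl hr x (y+z)
  have hy := associator_mul_left_self hl hr x y
  have hz := associator_mul_left_self hl hr x z
  simp only [associator_apply] at hyz hy hz ⊢
  linear_combination (norm := (simp only [mul_add, add_mul]; abel)) hyz - hy - hz

theorem moufang_left (hl : ∀ x y : R, (x*x)*y = x*(x*y)) (hr : ∀ x y : R, (y*x)*x = y*(x*x))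
    (x y z : R) : ((x*y)*x)*z = x*(y*(x*z)) := by
  -- the difference of the two sides is `associator (x*y) x z + associator x y (x*z)`
  have h := associator_mul_left_skew hl hr x y z
  rw [← associator_rotate hl hr (x*z) x y] at h
  simp only [associator_apply] at h
  linear_combination (norm := abel) h

open MulOpposite in
theorem moufang_right (hl : ∀ x y : R, (x*x)*y = x*(x*y)) (hr : ∀ x y : R, (y*x)*x = y*(x*x))
    (x y z : R) : z*((x*y)*x) = ((z*x)*y)*x := by
  have hl' (a b : Rᵐᵒᵖ) : (a*a)*b = a*(a*b) := unop_injective (hr a.unop b.unop).symm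
  have hr' (a b : Rᵐᵒᵖ) : (b*a)*a = b*(a*a) := unop_injective (hl a.unop b.unop).symm
  have h := congrArg unop (moufang_left hl' hr' (op x) (op y) (op z))
  simpa only [unop_mul, unop_op, flexible hl hr] using h

theorem mul_mul_eq_neg_of_mul_eq_zero (hl : ∀ x y : R, (x*x)*y = x*(x*y))
    (hr : ∀ x y : R, (y*x)*x = y*(x*x)) {a t : R} (hat : a*t = 0) (y : R) :
    (y*a)*t = -(a*(t*y)) := by
  have h := associator_rotate hl hr y a t
  simp only [associator_apply, hat, zero_mul, mul_zero, sub_zero, zero_sub] at h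
  exact h.symm

theorem commutator_mul_mul_eq_zero (hl : ∀ x y : R, (x*x)*y = x*(x*y))
    (hr : ∀ x y : R, (y*x)*x = y*(x*x)) {x t : R} (hxt : x*t = 0) (htx : t*x = 0) (y : R) :
    ((x*y - y*x)*x)*t = 0 := by
  have h₁ : ((x*y)*x)*t = 0 := by rw [moufang_left hl hr, hxt, mul_zero, mul_zero]
  have h₂ : ((y*x)*t)*x = 0 := by rw [← moufang_right hl hr, hxt, zero_mul, mul_zero]
  have h₃ : x*((y*x)*t) = 0 := by
    have h := associator_rotate hl hr x (y*x) t
    simp only [associator_apply, htx, h₂, mul_zero, sub_zero] at h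
    rw [← flexible hl hr, h₁, zero_sub] at h
    exact neg_eq_zero.mp h.symm
  have h₄ : (x*x)*(t*y) = 0 := by
    rw [hl, ← neg_eq_zero, ← mul_neg, ← mul_mul_eq_neg_of_mul_eq_zero hl hr hxt, h₃]
  have h₅ : ((y*x)*x)*t = 0 := by
    have hxxt : (x*x)*t = 0 := by rw [hl, hxt, mul_zero]
    rw [hr, mul_mul_eq_neg_of_mul_eq_zero hl hr hxxt, h₄, neg_zero]
  rw [sub_mul, sub_mul, h₁, h₅, sub_zero]

end Alternative

theorem stmt_16 {R : Type*} [NonUnitalNonAssocRing R]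
    (hl : ∀ x y : R, (x*x)*y = x*(x*y))
    (hr : ∀ x y : R, (y*x)*x = y*(x*x))
    (hA : ∀ a b : R, a*b - b*a ≠ 0 → ∀ t : R, (a*b - b*a)*t = 0 → t = 0)
    (x : R) (hx : ∃ y : R, x*y ≠ y*x) :
    ∀ t : R, x*t = 0 → t = 0 := by
  obtain ⟨y, hy⟩ := hx
  intro t ht
  by_cases htx : t*x = 0
  · have hcomm : x*(y*x) - (y*x)*x = (x*y - y*x)*x := by rw [sub_mul, Alternative.flexible hl hr]
    by_cases hc : x*(y*x) - (y*x)*x = 0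
    · have hx0 : x = 0 := hA x y (sub_ne_zero.mpr hy) x (hcomm ▸ hc)
      exact absurd (by rw [hx0, zero_mul, mul_zero]) hy
    · refine hA x (y*x) hc t ?_
      rw [hcomm]
      exact Alternative.commutator_mul_mul_eq_zero hl hr ht htx y
  · have hc : x*t - t*x ≠ 0 := by rwa [ht, zero_sub, neg_ne_zero]
    refine hA x t hc t ?_
    rw [ht, zero_sub, neg_mul, Alternative.flexible hl hr, ht, mul_zero, neg_zero]
end

section
/- Let R be an alternative ring in which every non-zero commutator [a,b] = a*b - b*a is neither a left nor a right zero divisor. If a non-zero r in R is not a left zero divisor (r*t = 0 implies t = 0), then r is also not a right zero divisor (s*r = 0 implies s = 0). -/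
/-!
If `s * r = 0` then `[r, s] = r * s`. Either `r * s = 0`, and `s = 0` because `r` is not a
left zero divisor, or `[r, s]` is a non-zero commutator with
`s * [r, s] = s * (r * s) = (s * r) * s = 0` by the flexible law, so again `s = 0`.
-/

/-- Linearizing the right alternative law at `b + a` gives the flexible law. -/
theorem flexible_of_alternative {R : Type*} [NonUnitalNonAssocRing R]
    (hl : ∀ x y : R, (x*x)*y = x*(x*y)) (hr : ∀ x y : R, (y*x)*x = y*(x*x)) (a b : R) :
    (a*b)*a = a*(b*a) := by
  have h := hr (b + a) a
  simp only [mul_add, add_mul] at h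
  rw [hr b a, hl a b, hr a a] at h
  linear_combination (norm := abel) h

theorem stmt_19_general {R : Type*} [NonUnitalNonAssocRing R]
    (hl : ∀ x y : R, (x*x)*y = x*(x*y))
    (hr : ∀ x y : R, (y*x)*x = y*(x*x))
    (hA : ∀ a b : R, a*b - b*a ≠ 0 →
      (∀ t : R, (a*b - b*a)*t = 0 → t = 0) ∧
      (∀ s : R, s*(a*b - b*a) = 0 → s = 0))
    (r : R) (hleft : ∀ t : R, r*t = 0 → t = 0) :
    ∀ s : R, s*r = 0 → s = 0 := by
  intro s hsr
  have hcomm : r*s - s*r = r*s := by rw [hsr, sub_zero]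
  by_cases hrs : r*s = 0
  · exact hleft s hrs
  · refine (hA r s (hcomm.symm ▸ hrs)).2 s ?_
    rw [hcomm, ← flexible_of_alternative hl hr, hsr, zero_mul]

theorem stmt_19 {R : Type*} [NonUnitalNonAssocRing R]
    (hl : ∀ x y : R, (x*x)*y = x*(x*y))
    (hr : ∀ x y : R, (y*x)*x = y*(x*x))
    (hA : ∀ a b : R, a*b - b*a ≠ 0 →
      (∀ t : R, (a*b - b*a)*t = 0 → t = 0) ∧
      (∀ s : R, s*(a*b - b*a) = 0 → s = 0))
    (r : R) (hr0 : r ≠ 0) (hleft : ∀ t : R, r*t = 0 → t = 0) :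
    ∀ s : R, s*r = 0 → s = 0 :=
  stmt_19_general hl hr hA r hleft
end
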